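/- arXiv:math-ph/0703087 — 6 statements merged into one kernel-verified Lean document; each statement's English description precedes it below -/
import Mathlib

section
/- Let q = e^{2πi/3}. If a polynomial P ∈ ℂ[x,y] satisfies the exchange relation (q·x + y)·P(x,y) = (x + q·y)·P(y,x), then there exists a polynomial Q ∈ ℂ[x,y] with Q(x,y) = Q(y,x) such that P(x,y) = (x + q·y)·Q(x,y). -/
/-!
Substituting `x = -q y` kills the right-hand side of the exchange relation and turns the factor
`q x + y` into `(1 - q²) y`, which is nonzero since `q² ≠ 1`. Hence `P` vanishes on the line
`x + q y = 0` and is divisible by `x + q y`. Writing `P = (x + q y) Q`, the exchange relation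
becomes `(q x + y)(x + q y) Q(x,y) = (x + q y)(q x + y) Q(y,x)`, and cancelling the nonzero factor
gives the symmetry of `Q`.
-/

open MvPolynomial

noncomputable def q : ℂ := Complex.exp (2 * Real.pi * Complex.I / 3)

theorem q_sq_ne_one : q ^ 2 ≠ 1 := by
  have hq : IsPrimitiveRoot q 3 := by
    simpa [q] using Complex.isPrimitiveRoot_exp 3 (by norm_num)
  exact hq.pow_ne_one_of_pos_of_lt (by norm_num) (by norm_num)

namespace MvPolynomial

section CommSemiring

variable {R : Type*} [CommSemiring R]

theorem finSuccEquiv_one_X_one : finSuccEquiv R 1 (X 1) = Polynomial.C (X 0) :=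
  finSuccEquiv_X_succ (j := 0)

theorem eval_finSuccEquiv_one (c : MvPolynomial (Fin 1) R) (P : MvPolynomial (Fin 2) R) :
    (finSuccEquiv R 1 P).eval c = aeval ![c, X 0] P := by
  induction P using MvPolynomial.induction_on with
  | C r => simp [finSuccEquiv_apply]
  | add p r hp hr => simp [hp, hr]
  | mul_X p i hp =>
    fin_cases i
    · simp [hp, finSuccEquiv_X_zero]
    · simp [hp, finSuccEquiv_one_X_one]

variable [Nontrivial R]

theorem C_mul_X_zero_add_X_one_ne_zero (a : R) :
    C a * X 0 + X 1 ≠ (0 : MvPolynomial (Fin 2) R) := by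
  intro h0
  simpa using congrArg (eval ![0, 1]) h0

theorem X_zero_add_C_mul_X_one_ne_zero (a : R) :
    X 0 + C a * X 1 ≠ (0 : MvPolynomial (Fin 2) R) := by
  intro h0
  simpa using congrArg (eval ![1, 0]) h0

end CommSemiring

section CommRing

variable {R : Type*} [CommRing R]

theorem X_zero_add_C_mul_X_one_dvd_iff (a : R) (P : MvPolynomial (Fin 2) R) :
    X 0 + C a * X 1 ∣ P ↔ aeval ![-(C a * X 0), X (0 : Fin 1)] P = 0 := by
  have hL : finSuccEquiv R 1 (X 0 + C a * X 1) = Polynomial.X - Polynomial.C (-(C a * X 0)) := by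
    rw [map_add, map_mul, finSuccEquiv_X_zero, finSuccEquiv_one_X_one]
    simp [finSuccEquiv_apply]
  rw [← map_dvd_iff (finSuccEquiv R 1), hL, Polynomial.dvd_iff_isRoot, Polynomial.IsRoot,
    eval_finSuccEquiv_one]

variable [IsDomain R]

theorem X_zero_add_C_mul_X_one_dvd_of_exchange {a : R} (ha : a ^ 2 ≠ 1)
    {P : MvPolynomial (Fin 2) R}
    (h : (C a * X 0 + X 1) * P = (X 0 + C a * X 1) * rename (Equiv.swap (0 : Fin 2) 1) P) :
    X 0 + C a * X 1 ∣ P := by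
  rw [X_zero_add_C_mul_X_one_dvd_iff]
  have h' := congrArg (aeval ![-(C a * X 0), X (0 : Fin 1)]) h
  simp only [map_mul, map_add, aeval_C, aeval_X, algebraMap_eq, Matrix.cons_val_zero,
    Matrix.cons_val_one, neg_add_cancel, zero_mul] at h'
  have hcoef : C a * -(C a * X 0) + X 0 = C (1 - a ^ 2) * X (0 : Fin 1) := by
    rw [C_sub, C_1, C_pow]; ring
  have hcoef_ne : C (1 - a ^ 2) * X 0 ≠ (0 : MvPolynomial (Fin 1) R) :=
    mul_ne_zero (by rw [Ne, C_eq_zero, sub_eq_zero]; exact ha.symm) (X_ne_zero 0)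
  rw [hcoef] at h'
  exact (mul_eq_zero.mp h').resolve_left hcoef_ne

theorem rename_swap_eq_of_exchange {a : R} {Q : MvPolynomial (Fin 2) R}
    (h : (C a * X 0 + X 1) * ((X 0 + C a * X 1) * Q)
      = (X 0 + C a * X 1) * rename (Equiv.swap (0 : Fin 2) 1) ((X 0 + C a * X 1) * Q)) :
    rename (Equiv.swap (0 : Fin 2) 1) Q = Q := by
  have hswap : rename (Equiv.swap (0 : Fin 2) 1) (X 0 + C a * X 1) = C a * X 0 + X 1 := by
    simp only [map_add, map_mul, rename_X, rename_C, Equiv.swap_apply_left,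
      Equiv.swap_apply_right]
    ring
  rw [map_mul, hswap] at h
  refine mul_left_cancel₀ (mul_ne_zero (C_mul_X_zero_add_X_one_ne_zero a)
    (X_zero_add_C_mul_X_one_ne_zero a)) ?_
  linear_combination -h

theorem exists_rename_swap_eq_and_eq_mul_of_exchange {a : R} (ha : a ^ 2 ≠ 1)
    {P : MvPolynomial (Fin 2) R}
    (h : (C a * X 0 + X 1) * P = (X 0 + C a * X 1) * rename (Equiv.swap (0 : Fin 2) 1) P) :
    ∃ Q : MvPolynomial (Fin 2) R,
      rename (Equiv.swap (0 : Fin 2) 1) Q = Q ∧ P = (X 0 + C a * X 1) * Q := by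
  obtain ⟨Q, rfl⟩ := X_zero_add_C_mul_X_one_dvd_of_exchange ha h
  exact ⟨Q, rename_swap_eq_of_exchange h, rfl⟩

end CommRing

end MvPolynomial

/-- If a polynomial `P ∈ ℂ[x,y]` satisfies the exchange relation
`(q·x + y)·P(x,y) = (x + q·y)·P(y,x)` with `q = e^{2πi/3}`, then
`P(x,y) = (x + q·y)·Q(x,y)` for some symmetric polynomial `Q`. -/
theorem exchange_factorization_two_vars (P : MvPolynomial (Fin 2) ℂ)
    (h : (C q * X 0 + X 1) * P
        = (X 0 + C q * X 1) * rename (Equiv.swap (0 : Fin 2) 1) P) :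
    ∃ Q : MvPolynomial (Fin 2) ℂ,
      rename (Equiv.swap (0 : Fin 2) 1) Q = Q ∧ P = (X 0 + C q * X 1) * Q :=
  exists_rename_swap_eq_and_eq_mul_of_exchange q_sq_ne_one h
end

section
/- Let q = e^{2πi/3} and let N ≥ 2. Suppose P ∈ ℂ[z_1,…,z_N] satisfies, for every i ∈ {1,…,N−1}, the adjacent exchange relation (q·z_i + z_{i+1})·P(…,z_i,z_{i+1},…) = (z_i + q·z_{i+1})·P(…,z_{i+1},z_i,…), where the right-hand side is P with the variables z_i and z_{i+1} interchanged. Then there exists a symmetric polynomial S ∈ ℂ[z_1,…,z_N] such that P(z_1,…,z_N) = ∏_{1 ≤ l < m ≤ N} (z_l + q·z_m) · S(z_1,…,z_N). -/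
open MvPolynomial

/-!
Write `ℓ(l, m) = z_l + q z_m` (`trivialFactor q (l, m)`). The swap of `z_i` and `z_{i+1}`
permutes the factors of `D' = ∏_{l > m} ℓ(l, m)` except that it sends `ℓ(i+1, i)` to `ℓ(i, i+1)`,
so the exchange relation at `i` says exactly that `T = D' · P` is invariant under this swap.
Hence `T` is symmetric. Every `ℓ(l, m)` with `l > m` divides `T`, so by symmetry every `ℓ(l, m)`
with `l ≠ m` does. Since `q ≠ 0` and `q² ≠ 1`, these are pairwise non-associated irreducibles, so
their product `∏_{l < m} ℓ(l, m) · D'` divides `T`, and cancelling `D'` leaves a symmetric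
quotient.
-/

open Equiv Finset

theorem isPrimitiveRoot_q : IsPrimitiveRoot q 3 := by
  simpa [q] using Complex.isPrimitiveRoot_exp 3 (by norm_num)

section LinearOrder

variable {ι : Type*} [LinearOrder ι] {a b x y : ι}

theorem Equiv.swap_lt_swap_of_covBy (hab : a ⋖ b) (hxy : x < y) (hne : (x, y) ≠ (a, b)) :
    swap a b x < swap a b y := by
  have hlt := hab.lt
  have hb_le : ∀ z, a < z → b ≤ z := fun _ => hab.ge_of_gt
  have hle_a : ∀ z, z < b → z ≤ a := fun _ => hab.le_of_lt
  simp only [swap_apply_def]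
  split_ifs <;> grind

theorem Finset.prod_offDiag_eq_prod_lt_mul_prod_gt {M : Type*} [CommMonoid M] [Fintype ι]
    (f : ι × ι → M) :
    ∏ p ∈ (univ : Finset ι).offDiag, f p
      = (∏ p with p.1 < p.2, f p) * ∏ p with p.2 < p.1, f p := by
  rw [← prod_filter_mul_prod_filter_not _ fun p : ι × ι => p.1 < p.2]
  congr 2 <;> ext p <;> simp only [mem_filter, mem_offDiag, mem_univ, true_and] <;> grind

end LinearOrder

namespace MvPolynomial

variable {σ τ K : Type*}

noncomputable def trivialFactor [CommSemiring K] (c : K) (p : σ × σ) : MvPolynomial σ K :=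
  X p.1 + C c * X p.2

theorem rename_trivialFactor [CommSemiring K] (c : K) (f : σ → τ) (p : σ × σ) :
    rename f (trivialFactor c p) = trivialFactor c (f p.1, f p.2) := by
  simp [trivialFactor]

theorem irreducible_trivialFactor [CommRing K] [IsDomain K] (c : K) {p : σ × σ}
    (hp : p.1 ≠ p.2) : Irreducible (trivialFactor c p) := by
  classical
  have h := irreducible_sumSMulX (Finsupp.single p.1 1 + Finsupp.single p.2 c)
    ⟨p.1, by simp [hp.symm]⟩ (fun r hr => isUnit_of_dvd_one (by simpa [hp.symm] using hr p.1))
  simpa [sumSMulX, trivialFactor, smul_eq_C_mul] using h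

theorem trivialFactor_not_dvd [CommRing K] [IsDomain K] {c : K} (hc₀ : c ≠ 0) (hc₁ : c ^ 2 ≠ 1)
    {p p' : σ × σ} (hp : p.1 ≠ p.2) (hp' : p'.1 ≠ p'.2) (hne : p ≠ p') :
    ¬ trivialFactor c p ∣ trivialFactor c p' := by
  classical
  obtain ⟨a, b⟩ := p
  obtain ⟨a', b'⟩ := p'
  rintro ⟨g, hg⟩
  -- a zero of `trivialFactor c (a, b)` but, as `c ≠ 0` and `c ^ 2 ≠ 1`, not of the other one
  set v : σ → K := fun j => if j = a then -c else if j = b then 1 else if j = a' then 1 else 0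
  have hv : eval v (trivialFactor c (a, b)) = 0 := by simp [v, trivialFactor, Ne.symm hp]
  have h := congrArg (eval v) hg
  rw [map_mul, hv, zero_mul] at h
  simp only [v, trivialFactor, map_add, map_mul, eval_X, eval_C] at h
  split_ifs at h <;> grind [one_ne_zero]

theorem prod_trivialFactor_dvd [Field K] {c : K} (hc₀ : c ≠ 0) (hc₁ : c ^ 2 ≠ 1)
    {s : Finset (σ × σ)} (hs : ∀ p ∈ s, p.1 ≠ p.2) {T : MvPolynomial σ K}
    (h : ∀ p ∈ s, trivialFactor c p ∣ T) : ∏ p ∈ s, trivialFactor c p ∣ T :=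
  Finset.prod_dvd_of_isRelPrime (fun p hp p' hp' hne =>
    (irreducible_trivialFactor c (hs p hp)).isRelPrime_iff_not_dvd.2
      (trivialFactor_not_dvd hc₀ hc₁ (hs p hp) (hs p' hp') hne)) h

theorem isSymmetric_prod_trivialFactor_offDiag [CommSemiring K] [Fintype σ] [DecidableEq σ]
    (c : K) : (∏ p ∈ (univ : Finset σ).offDiag, trivialFactor c p).IsSymmetric := fun e => by
  rw [map_prod]
  exact prod_equiv (e.prodCongr e) (by simp [e.injective.ne_iff])
    fun p _ => rename_trivialFactor c e p

theorem trivialFactor_dvd_of_swap_dvd [CommSemiring K] [DecidableEq σ] {c : K} {p : σ × σ}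
    {T : MvPolynomial σ K} (hT : T.IsSymmetric) (h : trivialFactor c p.swap ∣ T) :
    trivialFactor c p ∣ T := by
  simpa [rename_trivialFactor, hT (swap p.1 p.2), Prod.swap] using
    map_dvd (rename (swap p.1 p.2)) h

theorem IsSymmetric.of_mul_left [CommRing K] [IsDomain K] {φ ψ : MvPolynomial σ K}
    (hφ : φ.IsSymmetric) (hφ₀ : φ ≠ 0) (h : (φ * ψ).IsSymmetric) : ψ.IsSymmetric := fun e =>
  mul_left_cancel₀ hφ₀ (by rw [← hφ e, ← map_mul, h e, hφ e])

theorem isSymmetric_of_rename_swap_covBy [CommSemiring K] {N : ℕ} {f : MvPolynomial (Fin N) K}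
    (h : ∀ a b : Fin N, a ⋖ b → rename (swap a b) f = f) : f.IsSymmetric := by
  intro e
  obtain _ | n := N
  · rw [Subsingleton.elim e 1, Perm.coe_one, rename_id_apply]
  have he : e ∈ Submonoid.closure (Set.range fun i : Fin n => swap i.castSucc i.succ) := by
    rw [Perm.mclosure_swap_castSucc_succ]
    exact Submonoid.mem_top e
  induction he using Submonoid.closure_induction with
  | mem _ hx =>
    obtain ⟨i, rfl⟩ := hx
    exact h _ _ (by simp)
  | one => rw [Perm.coe_one, rename_id_apply]
  | mul x y _ _ hx hy => rw [Perm.coe_mul, ← rename_rename, hy, hx]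

theorem rename_swap_prod_trivialFactor_gt [CommSemiring K] [LinearOrder σ] [Fintype σ]
    (c : K) {a b : σ} (hab : a ⋖ b) :
    rename (swap a b) (∏ p with p.2 < p.1, trivialFactor c p) * trivialFactor c (b, a)
      = (∏ p with p.2 < p.1, trivialFactor c p) * trivialFactor c (a, b) := by
  set s := ({p | p.2 < p.1} : Finset (σ × σ))
  have hba : (b, a) ∈ s := by simpa [s] using hab.lt
  have hmaps : ∀ p ∈ s.erase (b, a), (swap a b p.1, swap a b p.2) ∈ s.erase (b, a) := by
    rintro ⟨x, y⟩ hp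
    simp only [s, mem_erase, mem_filter, mem_univ, true_and, ne_eq, Prod.mk.injEq] at hp ⊢
    refine ⟨fun h => ?_, swap_lt_swap_of_covBy hab hp.2 (by grind)⟩
    simp only [swap_apply_eq_iff, swap_apply_left, swap_apply_right] at h
    exact hp.2.not_gt (h.1 ▸ h.2 ▸ hab.lt)
  have hrest : rename (swap a b) (∏ p ∈ s.erase (b, a), trivialFactor c p)
      = ∏ p ∈ s.erase (b, a), trivialFactor c p := by
    rw [map_prod]
    refine prod_equiv ((swap a b).prodCongr (swap a b)) (fun p => ⟨hmaps p, fun h => ?_⟩)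
      fun p _ => rename_trivialFactor c _ p
    simpa using hmaps _ h
  rw [← mul_prod_erase s _ hba, map_mul, hrest, rename_trivialFactor, swap_apply_left,
    swap_apply_right]
  ring

theorem isSymmetric_prod_trivialFactor_gt_mul [CommRing K] [IsDomain K] {N : ℕ} (c : K)
    {P : MvPolynomial (Fin N) K} (hP : ∀ a b : Fin N, a ⋖ b →
      trivialFactor c (b, a) * P = trivialFactor c (a, b) * rename (swap a b) P) :
    ((∏ p : Fin N × Fin N with p.2 < p.1, trivialFactor c p) * P).IsSymmetric := by
  set D' := ∏ p ∈ ({p | p.2 < p.1} : Finset (Fin N × Fin N)), trivialFactor c p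
  refine isSymmetric_of_rename_swap_covBy fun a b hab => ?_
  apply mul_left_cancel₀ (irreducible_trivialFactor c (p := (b, a)) hab.ne.symm).ne_zero
  calc trivialFactor c (b, a) * rename (swap a b) (D' * P)
      = (rename (swap a b) D' * trivialFactor c (b, a)) * rename (swap a b) P := by
        rw [map_mul]; ring
    _ = D' * (trivialFactor c (a, b) * rename (swap a b) P) := by
        rw [rename_swap_prod_trivialFactor_gt c hab]; ring
    _ = trivialFactor c (b, a) * (D' * P) := by rw [← hP a b hab]; ring

theorem exists_isSymmetric_eq_prod_trivialFactor_mul [Field K] {N : ℕ} {c : K} (hc₀ : c ≠ 0)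
    (hc₁ : c ^ 2 ≠ 1) {P : MvPolynomial (Fin N) K} (hP : ∀ a b : Fin N, a ⋖ b →
      trivialFactor c (b, a) * P = trivialFactor c (a, b) * rename (swap a b) P) :
    ∃ S : MvPolynomial (Fin N) K,
      S.IsSymmetric ∧ P = (∏ p with p.1 < p.2, trivialFactor c p) * S := by
  set D' := ∏ p ∈ ({p | p.2 < p.1} : Finset (Fin N × Fin N)), trivialFactor c p
  have hT : (D' * P).IsSymmetric := isSymmetric_prod_trivialFactor_gt_mul c hP
  have hF₀ : ∏ p ∈ (univ : Finset (Fin N)).offDiag, trivialFactor c p ≠ 0 :=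
    prod_ne_zero_iff.2 fun p hp => (irreducible_trivialFactor c (mem_offDiag.1 hp).2.2).ne_zero
  have hdvd_gt : ∀ p : Fin N × Fin N, p.2 < p.1 → trivialFactor c p ∣ D' * P := fun p hp =>
    (dvd_prod_of_mem _ (by simpa using hp)).mul_right P
  obtain ⟨S, hS⟩ : ∏ p ∈ (univ : Finset (Fin N)).offDiag, trivialFactor c p ∣ D' * P :=
    prod_trivialFactor_dvd hc₀ hc₁ (fun p hp => (mem_offDiag.1 hp).2.2)
      fun p hp => (mem_offDiag.1 hp).2.2.lt_or_gt.elim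
        (fun h => trivialFactor_dvd_of_swap_dvd hT (hdvd_gt p.swap h)) (hdvd_gt p)
  refine ⟨S, (isSymmetric_prod_trivialFactor_offDiag c).of_mul_left hF₀ (hS ▸ hT), ?_⟩
  rw [prod_offDiag_eq_prod_lt_mul_prod_gt] at hS hF₀
  apply mul_left_cancel₀ (right_ne_zero_of_mul hF₀)
  rw [hS]
  ring

end MvPolynomial

/-- If `P ∈ ℂ[z_1,…,z_N]` satisfies all the adjacent exchange relations
`(q·z_i + z_{i+1})·P(…,z_i,z_{i+1},…) = (z_i + q·z_{i+1})·P(…,z_{i+1},z_i,…)`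
with `q = e^{2πi/3}`, then `P = ∏_{l<m} (z_l + q·z_m) · S` with `S` symmetric. -/
theorem exchange_factorization (N : ℕ) (P : MvPolynomial (Fin N) ℂ)
    (h : ∀ i : ℕ, ∀ hi : i + 1 < N,
      (C q * X (⟨i, by omega⟩ : Fin N) + X ⟨i + 1, hi⟩) * P
        = (X (⟨i, by omega⟩ : Fin N) + C q * X ⟨i + 1, hi⟩)
            * rename (Equiv.swap (⟨i, by omega⟩ : Fin N) ⟨i + 1, hi⟩) P) :
    ∃ S : MvPolynomial (Fin N) ℂ,
      (∀ σ : Equiv.Perm (Fin N), rename σ S = S) ∧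
      P = (∏ p ∈ Finset.univ.filter (fun p : Fin N × Fin N => p.1 < p.2),
            (X p.1 + C q * X p.2)) * S := by
  have hq := isPrimitiveRoot_q
  refine exists_isSymmetric_eq_prod_trivialFactor_mul (hq.ne_zero (by norm_num))
    (hq.pow_ne_one_of_pos_of_lt (by norm_num) (by norm_num)) fun ⟨i, _⟩ ⟨j, hj⟩ hij => ?_
  obtain rfl : i + 1 = j := by simpa using hij
  rw [trivialFactor, add_comm (X _)]
  exact h i hj
end

section
/- Let q ∈ ℂ with q ≠ 0, let n ≥ 1, and let P ∈ ℂ[z_1,…,z_{2n}] be a polynomial that is symmetric under all permutations of the variables z_1,…,z_n and whose degree in the variable z_{2n} is at most n−1. If the substitution z_{2n} ↦ −q·z_1 sends P to the zero polynomial in ℂ[z_1,…,z_{2n−1}], then P = 0. -/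
/-! View `P` as a polynomial in `z_{2n}` with coefficients in `ℂ[z_1, …, z_{2n}]`. The substitution
`z_{2n} ↦ -q z_1` is a root of it, and conjugating by the transposition `(1 i)`, which fixes `z_{2n}`
and `P`, makes `-q z_i` a root for every `i ≤ n`. These `n` roots are distinct because `q ≠ 0`,
whereas the degree in `z_{2n}` is at most `n - 1`. -/

open MvPolynomial

namespace MvPolynomial

variable {R σ : Type*} [CommRing R] [DecidableEq σ]

/-- `P` as a polynomial in `X L`; its coefficients live in `MvPolynomial σ R` but never involve
`X L`. -/
noncomputable def polynomialIn (L : σ) : MvPolynomial σ R →ₐ[R] Polynomial (MvPolynomial σ R) :=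
  (optionEquivLeft R σ).toAlgHom.comp (rename fun j => if j = L then none else some j)

theorem natDegree_polynomialIn (L : σ) (P : MvPolynomial σ R) :
    (polynomialIn L P).natDegree = P.degreeOf L := by
  have hinj : Function.Injective fun j : σ => if j = L then none else some j := by
    intro i j; by_cases hi : i = L <;> by_cases hj : j = L <;> simp_all
  simpa [polynomialIn, natDegree_optionEquivLeft] using degreeOf_rename_of_injective hinj L

theorem eval_polynomialIn (L : σ) (r : MvPolynomial σ R) (P : MvPolynomial σ R) :
    (polynomialIn L P).eval r = aeval (Function.update X L r) P := by
  induction P using MvPolynomial.induction_on with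
  | C a => simp [polynomialIn]
  | add p q hp hq => simp [hp, hq]
  | mul_X p j hp =>
    rw [map_mul, Polynomial.eval_mul, hp, map_mul]
    by_cases hj : j = L
    · subst hj; simp [polynomialIn]
    · simp [polynomialIn, hj]

theorem eq_zero_of_degreeOf_lt_card_of_aeval_update_eq_zero [IsDomain R] {L : σ}
    {P : MvPolynomial σ R} {ι : Type*} [Fintype ι] {r : ι → MvPolynomial σ R}
    (hr : Function.Injective r) (hdeg : P.degreeOf L < Fintype.card ι)
    (hroot : ∀ i, aeval (Function.update X L (r i)) P = 0) : P = 0 := by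
  have hzero : polynomialIn L P = 0 :=
    Polynomial.eq_zero_of_natDegree_lt_card_of_eval_eq_zero _ hr
      (fun i => by rw [eval_polynomialIn, hroot]) (by rwa [natDegree_polynomialIn])
  simpa [eval_polynomialIn] using congrArg (Polynomial.eval (X L)) hzero

theorem aeval_update_X_eq_zero_of_rename_eq {L : σ} {P r : MvPolynomial σ R}
    {τ : Equiv.Perm σ} (hτL : τ L = L) (hτP : rename τ P = P)
    (hroot : aeval (Function.update X L r) P = 0) :
    aeval (Function.update X L (rename τ r)) P = 0 := by
  have hcomm : Function.update X L (rename τ r) ∘ τ = rename τ ∘ Function.update X L r := by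
    ext1 j
    by_cases hj : j = L
    · subst hj; simp [hτL]
    · have : τ j ≠ L := fun h => hj (τ.injective (h.trans hτL.symm))
      simp [hj, this]
  rw [← hτP, aeval_rename, hcomm, Function.comp_def, ← comp_aeval_apply, hroot, map_zero]

end MvPolynomial

/-- Uniqueness mechanism: if `P ∈ ℂ[z_1,…,z_{2n}]` is symmetric under all permutations
of the first `n` variables, has degree at most `n-1` in the last variable `z_{2n}`,
and the substitution `z_{2n} ↦ -q·z_1` sends `P` to the zero polynomial in
`ℂ[z_1,…,z_{2n-1}]`, then `P = 0` (for any `q ≠ 0`). -/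
theorem vanishing_from_symmetry_and_degree (q : ℂ) (hq : q ≠ 0) (n : ℕ) (hn : 1 ≤ n)
    (P : MvPolynomial (Fin (2 * n)) ℂ)
    (hsym : ∀ σ : Equiv.Perm (Fin (2 * n)),
      (∀ i : Fin (2 * n), n ≤ (i : ℕ) → σ i = i) → rename σ P = P)
    (hdeg : P.degreeOf (⟨2 * n - 1, by omega⟩ : Fin (2 * n)) ≤ n - 1)
    (hsub : aeval (fun i : Fin (2 * n) =>
        if h : (i : ℕ) < 2 * n - 1 then (X ⟨i, h⟩ : MvPolynomial (Fin (2 * n - 1)) ℂ)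
        else -(C q) * X (⟨0, by omega⟩ : Fin (2 * n - 1))) P = 0) :
    P = 0 := by
  set L : Fin (2 * n) := ⟨2 * n - 1, by omega⟩
  set z : Fin n → Fin (2 * n) := Fin.castLE (by omega)
  have hbase : aeval (Function.update X L (-C q * X (z ⟨0, hn⟩))) P = 0 := by
    -- `hsub`, read in `ℂ[z_1, …, z_{2n}]` through the inclusion of the first `2n - 1` variables
    have := congrArg (rename (Fin.castLE (by omega) : Fin (2 * n - 1) → Fin (2 * n))) hsub
    rw [map_zero, comp_aeval_apply] at this
    convert this using 2
    ext1 i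
    by_cases hi : (i : ℕ) < 2 * n - 1
    · have : i ≠ L := fun h => by simp [h, L] at hi
      simp [hi, this]
    · have : i = L := Fin.ext (by simp [L]; omega)
      subst this
      simp [hi, z]
  refine eq_zero_of_degreeOf_lt_card_of_aeval_update_eq_zero (L := L) (ι := Fin n)
    (r := fun i => -C q * X (z i)) ?_ (by rw [Fintype.card_fin]; omega) fun i => ?_
  · intro i j hij
    have hCq : (-C q : MvPolynomial (Fin (2 * n)) ℂ) ≠ 0 := by simpa using hq
    exact Fin.castLE_injective _ (X_injective (mul_left_cancel₀ hCq hij))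
  · have hfix : ∀ j : Fin (2 * n), n ≤ (j : ℕ) → Equiv.swap (z ⟨0, hn⟩) (z i) j = j := by
      intro j hj
      refine Equiv.swap_apply_of_ne_of_ne ?_ ?_ <;> rintro rfl <;> simp [z] at hj <;> omega
    simpa using aeval_update_X_eq_zero_of_rename_eq (hfix L (by simp [L]; omega))
      (hsym _ hfix) hbase
end

section
/- Let q = e^{2πi/3}. Suppose (P_n)_{n≥1} and (Q_n)_{n≥1} are two sequences with P_n, Q_n ∈ ℂ[z_1,…,z_{2n}], each of degree at most n−1 in every variable, each symmetric separately under permutations of (z_1,…,z_n) and under permutations of (z_{n+1},…,z_{2n}), and each satisfying the recursion F_n(z_1,…,z_{2n−1}, −q·z_1) = ∏_{j=2}^{n} q·(z_1 − q·z_j) · ∏_{j=n+1}^{2n−1} q·(z_1 + q·z_j) · F_{n−1}(z_2,…,z_{2n−1}) for all n ≥ 2. If P_1 = Q_1, then P_n = Q_n for all n ≥ 1. -/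
open MvPolynomial

open Finset

/-!
By induction, `A = P n - Q n` satisfies the recursion with zero right-hand side, i.e. it vanishes
on the hyperplane `z_{2n} = -q z_1`; by the symmetry in `z_1, …, z_n` it then vanishes on every
hyperplane `z_{2n} = -q z_i`, `i ≤ n`. At a point with distinct `z_1, …, z_n`, `A` is a polynomial
in `z_{2n}` of degree `< n` with the `n` distinct roots `-q z_i`, so it vanishes there; multiplying
by the Vandermonde product of `z_1, …, z_n` makes `A` vanish everywhere.
-/

namespace MvPolynomial

variable {σ R : Type*} [CommRing R]

lemma eval_aeval_update_X [DecidableEq σ] (p : MvPolynomial σ R) (x : σ → R) (k : σ) (t : R) :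
    (aeval (Function.update (Polynomial.C ∘ x) k Polynomial.X) p).eval t
      = eval (Function.update x k t) p := by
  rw [← Polynomial.coe_aeval_eq_eval, comp_aeval_apply, aeval_eq_eval]
  congr 2
  funext i
  by_cases h : i = k
  · subst h; simp
  · simp [h]

lemma natDegree_aeval_update_X_le [DecidableEq σ] (p : MvPolynomial σ R) (x : σ → R) (k : σ) :
    (aeval (Function.update (Polynomial.C ∘ x) k Polynomial.X) p).natDegree ≤ p.degreeOf k := by
  conv_lhs => rw [p.as_sum, map_sum]
  refine Polynomial.natDegree_sum_le_of_forall_le _ _ fun d hd => ?_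
  rw [aeval_monomial]
  refine (Polynomial.natDegree_C_mul_le _ _).trans ?_
  calc _ ≤ ∑ i ∈ d.support,
        ((Function.update (Polynomial.C ∘ x) k Polynomial.X) i ^ d i).natDegree :=
        Polynomial.natDegree_prod_le _ _
    _ ≤ ∑ i ∈ d.support, if k = i then d k else 0 := by
        refine sum_le_sum fun i _ => ?_
        by_cases h : k = i
        · subst h; simpa using Polynomial.natDegree_X_pow_le _
        · simp only [Function.update_of_ne (Ne.symm h), Function.comp_apply, ← Polynomial.C_pow,
            Polynomial.natDegree_C, if_neg h, le_refl]
    _ ≤ d k := by rw [sum_ite_eq]; split_ifs <;> simp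
    _ ≤ p.degreeOf k := monomial_le_degreeOf k hd

variable [IsDomain R]

lemma eval_eq_zero_of_degreeOf_lt_card [DecidableEq σ] (p : MvPolynomial σ R) (k : σ)
    (x : σ → R) (s : Finset R) (hdeg : p.degreeOf k < #s)
    (hzero : ∀ t ∈ s, eval (Function.update x k t) p = 0) : eval x p = 0 := by
  have hslice : aeval (Function.update (Polynomial.C ∘ x) k Polynomial.X) p = 0 :=
    Polynomial.eq_zero_of_natDegree_lt_card_of_eval_eq_zero' _ s
      (fun t ht => (eval_aeval_update_X p x k t).trans (hzero t ht))
      ((natDegree_aeval_update_X_le p x k).trans_lt hdeg)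
  simpa using (eval_aeval_update_X p x k (x k)).symm.trans (by rw [hslice, Polynomial.eval_zero])

lemma eq_zero_of_eval_eq_zero_of_injOn [Infinite R] (p : MvPolynomial σ R) (S : Finset σ)
    (hzero : ∀ x : σ → R, Set.InjOn x S → eval x p = 0) : p = 0 := by
  set V : MvPolynomial σ R := ∏ ij ∈ S.offDiag, (X ij.1 - X ij.2)
  have hV : V ≠ 0 := prod_ne_zero_iff.mpr fun ij hij =>
    sub_ne_zero.mpr fun h => (mem_offDiag.mp hij).2.2 (X_injective h)
  have hpV : p * V = 0 := MvPolynomial.funext fun x => by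
    by_cases hx : Set.InjOn x S
    · simp [hzero x hx]
    · obtain ⟨i, hi, j, hj, hxij, hij⟩ : ∃ i ∈ S, ∃ j ∈ S, x i = x j ∧ i ≠ j := by
        simpa [Set.InjOn] using hx
      rw [map_mul, map_zero, map_prod, prod_eq_zero (i := (i, j)) (by simp [hi, hj, hij])
        (by simp [hxij]), mul_zero]
  exact (mul_eq_zero.mp hpV).resolve_right hV

lemma eq_zero_of_degreeOf_lt_of_eval_eq_zero_on_hyperplanes [Infinite R] (p : MvPolynomial σ R)
    (k : σ) (S : Finset σ) (hk : k ∉ S) {c : R} (hc : c ≠ 0) (hdeg : p.degreeOf k < #S)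
    (hzero : ∀ i ∈ S, ∀ x : σ → R, x k = c * x i → eval x p = 0) : p = 0 := by
  classical
  refine eq_zero_of_eval_eq_zero_of_injOn p S fun x hx => ?_
  refine eval_eq_zero_of_degreeOf_lt_card p k x (S.image fun i => c * x i) ?_ ?_
  · rwa [card_image_of_injOn fun i hi j hj h => hx hi hj (mul_left_cancel₀ hc h)]
  · simp only [mem_image]
    rintro _ ⟨i, hi, rfl⟩
    refine hzero i hi _ ?_
    rw [Function.update_self, Function.update_of_ne (ne_of_mem_of_not_mem hi hk)]

end MvPolynomial

section

variable {R : Type*} [CommRing R]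

lemma eval_eq_zero_of_aeval_specialize_eq_zero {n : ℕ} (hn : 1 ≤ n) (c : R)
    (A : MvPolynomial (Fin (2 * n)) R)
    (hA : aeval (fun i : Fin (2 * n) =>
          if h : (i : ℕ) < 2 * n - 1 then (X ⟨i, h⟩ : MvPolynomial (Fin (2 * n - 1)) R)
          else -(C c) * X (⟨0, by omega⟩ : Fin (2 * n - 1))) A = 0)
    (x : Fin (2 * n) → R) (hx : x ⟨2 * n - 1, by omega⟩ = -c * x ⟨0, by omega⟩) :
    eval x A = 0 := by
  have := congrArg (aeval fun j : Fin (2 * n - 1) => x ⟨j, by omega⟩) hA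
  rw [comp_aeval_apply, map_zero, aeval_eq_eval] at this
  convert this using 3
  funext i
  by_cases h : (i : ℕ) < 2 * n - 1
  · simp [h]
  · simp only [h, dite_false, map_mul, map_neg, aeval_C, aeval_X, Algebra.algebraMap_self,
      RingHom.id_apply, ← hx]
    exact congrArg x (Fin.ext (by simp only; omega))

variable [IsDomain R] [Infinite R]

lemma eq_zero_of_aeval_specialize_eq_zero {n : ℕ} (hn : 1 ≤ n) {c : R} (hc : c ≠ 0)
    (A : MvPolynomial (Fin (2 * n)) R) (hdeg : ∀ i : Fin (2 * n), A.degreeOf i ≤ n - 1)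
    (hsym : ∀ σ : Equiv.Perm (Fin (2 * n)),
      (∀ i : Fin (2 * n), ((σ i : ℕ) < n ↔ (i : ℕ) < n)) → rename σ A = A)
    (hA : aeval (fun i : Fin (2 * n) =>
          if h : (i : ℕ) < 2 * n - 1 then (X ⟨i, h⟩ : MvPolynomial (Fin (2 * n - 1)) R)
          else -(C c) * X (⟨0, by omega⟩ : Fin (2 * n - 1))) A = 0) :
    A = 0 := by
  refine eq_zero_of_degreeOf_lt_of_eval_eq_zero_on_hyperplanes A ⟨2 * n - 1, by omega⟩
    {i | (i : ℕ) < n}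
    (by simp only [mem_filter, mem_univ, true_and, not_lt]; omega) (neg_ne_zero.mpr hc) ?_ ?_
  · rw [Fin.card_filter_val_lt]
    have := hdeg ⟨2 * n - 1, by omega⟩
    omega
  · intro i hi x hx
    simp only [mem_filter, mem_univ, true_and] at hi
    set τ := Equiv.swap (⟨0, by omega⟩ : Fin (2 * n)) i
    have hτ : ∀ j : Fin (2 * n), ((τ j : ℕ) < n ↔ (j : ℕ) < n) := by
      intro j
      rcases eq_or_ne j ⟨0, by omega⟩ with rfl | h0
      · simp only [τ, Equiv.swap_apply_left, hi, true_iff]; omega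
      rcases eq_or_ne j i with rfl | hji
      · simp only [τ, Equiv.swap_apply_right, hi, iff_true]; omega
      · rw [Equiv.swap_apply_of_ne_of_ne h0 hji]
    rw [← hsym τ hτ, eval_rename]
    refine eval_eq_zero_of_aeval_specialize_eq_zero hn c A hA _ ?_
    simp only [Function.comp_apply, τ, Equiv.swap_apply_left]
    rwa [Equiv.swap_apply_of_ne_of_ne (by simp only [ne_eq, Fin.ext_iff]; omega)
      (by simp only [ne_eq, Fin.ext_iff]; omega)]

end

/-- Uniqueness of the solution of the recursion (recur-tilde): two sequences of polynomials
`P_n, Q_n ∈ ℂ[z_1,…,z_{2n}]`, of degree at most `n-1` in each variable, symmetric separately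
under permutations of the first `n` and of the last `n` variables, both satisfying the
recursion for all `n ≥ 2`, and agreeing at `n = 1`, agree for all `n ≥ 1`. -/
theorem recursion_unique_solution
    (P Q : (n : ℕ) → MvPolynomial (Fin (2 * n)) ℂ)
    (hPdeg : ∀ n, 1 ≤ n → ∀ i : Fin (2 * n), (P n).degreeOf i ≤ n - 1)
    (hQdeg : ∀ n, 1 ≤ n → ∀ i : Fin (2 * n), (Q n).degreeOf i ≤ n - 1)
    (hPsym : ∀ n, ∀ σ : Equiv.Perm (Fin (2 * n)),
      (∀ i : Fin (2 * n), ((σ i : ℕ) < n ↔ (i : ℕ) < n)) → rename σ (P n) = P n)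
    (hQsym : ∀ n, ∀ σ : Equiv.Perm (Fin (2 * n)),
      (∀ i : Fin (2 * n), ((σ i : ℕ) < n ↔ (i : ℕ) < n)) → rename σ (Q n) = Q n)
    (hPrec : ∀ n, ∀ hn : 2 ≤ n,
      aeval (fun i : Fin (2 * n) =>
          if h : (i : ℕ) < 2 * n - 1 then (X ⟨i, h⟩ : MvPolynomial (Fin (2 * n - 1)) ℂ)
          else -(C q) * X (⟨0, by omega⟩ : Fin (2 * n - 1))) (P n)
      = (∏ j ∈ Finset.univ.filter
            (fun j : Fin (2 * n - 1) => 1 ≤ (j : ℕ) ∧ (j : ℕ) ≤ n - 1),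
          C q * (X (⟨0, by omega⟩ : Fin (2 * n - 1)) - C q * X j))
        * (∏ j ∈ Finset.univ.filter (fun j : Fin (2 * n - 1) => n ≤ (j : ℕ)),
          C q * (X (⟨0, by omega⟩ : Fin (2 * n - 1)) + C q * X j))
        * rename (fun i : Fin (2 * (n - 1)) =>
            (⟨(i : ℕ) + 1, by have := i.isLt; omega⟩ : Fin (2 * n - 1)))
            (P (n - 1)))
    (hQrec : ∀ n, ∀ hn : 2 ≤ n,
      aeval (fun i : Fin (2 * n) =>
          if h : (i : ℕ) < 2 * n - 1 then (X ⟨i, h⟩ : MvPolynomial (Fin (2 * n - 1)) ℂ)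
          else -(C q) * X (⟨0, by omega⟩ : Fin (2 * n - 1))) (Q n)
      = (∏ j ∈ Finset.univ.filter
            (fun j : Fin (2 * n - 1) => 1 ≤ (j : ℕ) ∧ (j : ℕ) ≤ n - 1),
          C q * (X (⟨0, by omega⟩ : Fin (2 * n - 1)) - C q * X j))
        * (∏ j ∈ Finset.univ.filter (fun j : Fin (2 * n - 1) => n ≤ (j : ℕ)),
          C q * (X (⟨0, by omega⟩ : Fin (2 * n - 1)) + C q * X j))
        * rename (fun i : Fin (2 * (n - 1)) =>
            (⟨(i : ℕ) + 1, by have := i.isLt; omega⟩ : Fin (2 * n - 1)))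
            (Q (n - 1)))
    (hinit : P 1 = Q 1) :
    ∀ n, 1 ≤ n → P n = Q n := by
  intro n hn
  induction n, hn using Nat.le_induction with
  | base => exact hinit
  | succ n hn ih =>
    refine sub_eq_zero.mp (eq_zero_of_aeval_specialize_eq_zero (by omega)
      (c := q) (Complex.exp_ne_zero _) (P (n + 1) - Q (n + 1))
      (fun i => (degreeOf_sub_le i _ _).trans
        (max_le (hPdeg _ (by omega) i) (hQdeg _ (by omega) i)))
      (fun σ hσ => by rw [map_sub, hPsym _ σ hσ, hQsym _ σ hσ]) ?_)
    rw [map_sub, hPrec (n + 1) (by omega), hQrec (n + 1) (by omega),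
      show P (n + 1 - 1) = Q (n + 1 - 1) from ih, sub_self]
end

section
/- Let n ≥ 1. The Schur polynomial s_{Y_n} in 2n variables evaluated at the point (1,1,…,1) satisfies s_{Y_n}(1,…,1) = 3^{n(n−1)/2} · ∏_{i=1}^{n} (3i−2)! / (n+i−1)!. -/
open MvPolynomial

/-- Complete homogeneous symmetric polynomial with integer index (zero for negative index). -/
noncomputable def hInt (N : ℕ) (m : ℤ) : MvPolynomial (Fin N) ℂ :=
  if 0 ≤ m then MvPolynomial.hsymm (Fin N) ℂ m.toNat else 0

/-- Schur polynomial in `N` variables for the partition `lam` (padded with zeros to `L` parts),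
defined by the Jacobi–Trudi determinant `det (h_{λ_i - i + j})`. -/
noncomputable def schur (N : ℕ) {L : ℕ} (lam : Fin L → ℕ) : MvPolynomial (Fin N) ℂ :=
  Matrix.det (Matrix.of fun i j : Fin L => hInt N ((lam i : ℤ) - (i : ℤ) + (j : ℤ)))

/-- The partition `Y_n = (n-1,n-1,n-2,n-2,…,1,1)`, padded with zeros to `2n` parts. -/
def Ypart (n : ℕ) : Fin (2 * n) → ℕ := fun i => n - 1 - (i : ℕ) / 2

/-!
Evaluated at `1`, the Jacobi–Trudi entry `h_{λ_i - i + j}` becomes `C(l_i + j, N - 1)` with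
`l_i = λ_i + N - 1 - i`. After reversing rows and columns, Chu–Vandermonde factors the matrix as
`(C(x_i, k))` times a unitriangular one, where `x_t = λ_{N-1-t} + t`, and `k! C(x_i, k)` is a monic
polynomial of degree `k` in `x_i`; so `s_λ(1^N) ∏_{k<N} k! = ∏_{i<j} (x_j - x_i)`.
For `Y_n` one gets `x_t = ⌊t/2⌋ + t`, i.e. `0, 1, 3, 4, 6, 7, …`, and the two new points added in
passing from `n` to `n + 1` contribute `3^n n! (3n+1)!` to the Vandermonde product.
-/

open Finset

open scoped Nat

lemma eval_one_hsymm {σ R : Type*} [Fintype σ] [DecidableEq σ] [CommSemiring R] (k : ℕ) :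
    eval (fun _ => 1) (hsymm σ R k) = ((Fintype.card σ + k - 1).choose k : R) := by
  simp [hsymm, map_multiset_prod, Sym.card_sym_eq_choose]

lemma eval_one_hInt_succ (N a : ℕ) :
    eval (fun _ => (1 : ℂ)) (hInt (N + 1) ((a : ℤ) - N)) = (a.choose N : ℂ) := by
  rw [hInt]
  split_ifs
  · rw [eval_one_hsymm, Fintype.card_fin, ← Nat.choose_symm (by omega)]
    congr 2 <;> omega
  · rw [map_zero, Nat.choose_eq_zero_of_lt (by omega), Nat.cast_zero]

namespace Matrix

variable {R : Type*} [CommRing R]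

theorem prod_factorial_mul_det_choose [IsDomain R] {n : ℕ} (x : Fin n → ℕ) :
    (∏ k : Fin n, ((k : ℕ)! : R)) * (of fun i k : Fin n => ((x i).choose k : R)).det
      = (vandermonde fun i => (x i : R)).det := by
  rw [← det_mul_row, det_eval_matrixOfPolynomials_eq_det_vandermonde _
    (fun k => descPochhammer R k) (fun k => descPochhammer_natDegree R k)
    (fun k => monic_descPochhammer R k)]
  congr 1
  ext i k
  simp [descPochhammer_eval_eq_descFactorial, Nat.descFactorial_eq_factorial_mul_choose]

theorem det_choose_add_rev {n : ℕ} (x : Fin (n + 1) → ℕ) :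
    (of fun i j : Fin (n + 1) => ((x i + (n - j)).choose n : R)).det
      = (of fun i k : Fin (n + 1) => ((x i).choose k : R)).det := by
  set T : Matrix (Fin (n + 1)) (Fin (n + 1)) R :=
    of fun k j => ((n - j : ℕ).choose (n - k) : R)
  have hT : T.det = 1 := by
    rw [det_of_isLowerTriangular T fun k j (hkj : k < j) => by
      simp [T, Nat.choose_eq_zero_of_lt (show n - j < n - k by omega)]]
    simp [T]
  have hfactor : (of fun i j : Fin (n + 1) => ((x i + (n - j)).choose n : R))
      = (of fun i k : Fin (n + 1) => ((x i).choose k : R)) * T := by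
    ext i j
    simp only [of_apply, mul_apply, T, Nat.add_choose_eq, Nat.antidiagonal_eq_map,
      sum_map, Fin.sum_univ_eq_sum_range (fun k => ((x i).choose k : R) * ((n - j).choose (n - k)))]
    push_cast
    rfl
  rw [hfactor, det_mul, hT, mul_one]

end Matrix

open Matrix in
theorem prod_factorial_mul_eval_one_schur (N : ℕ) (lam : Fin N → ℕ) :
    (∏ k : Fin N, ((k : ℕ)! : ℂ)) * eval (fun _ => 1) (schur N lam)
      = ∏ i : Fin N, ∏ j ∈ Ioi i,
          (((lam j.rev + j : ℕ) : ℂ) - ((lam i.rev + i : ℕ) : ℂ)) := by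
  cases N with
  | zero => simp [schur]
  | succ N =>
    have hentries : ((of fun i j : Fin (N + 1) => hInt (N + 1) ((lam i : ℤ) - i + j)).map
        (eval fun _ => (1 : ℂ))).submatrix Fin.revPerm Fin.revPerm
        = of fun i j : Fin (N + 1) => ((lam i.rev + i + (N - j)).choose N : ℂ) := by
      ext i j
      simp only [submatrix_apply, map_apply, of_apply, Fin.revPerm_apply, Fin.val_rev]
      rw [← eval_one_hInt_succ]
      congr 2
      omega
    rw [schur, RingHom.map_det, RingHom.mapMatrix_apply,
      ← det_submatrix_equiv_self Fin.revPerm, hentries,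
      det_choose_add_rev (fun i => lam i.rev + i), prod_factorial_mul_det_choose, det_vandermonde]

theorem prod_Ioi_eq_prod_range_prod_range {M : Type*} [CommMonoid M] (m : ℕ) (g : ℕ → ℕ → M) :
    ∏ i : Fin m, ∏ j ∈ Ioi i, g i j = ∏ j ∈ range m, ∏ i ∈ range j, g i j := by
  rw [prod_comm' (t' := univ) (s' := fun j => Iio j) (fun i j => by simp),
    ← Fin.prod_univ_eq_prod_range (fun j => ∏ i ∈ range j, g i j)]
  refine prod_congr rfl fun j _ => ?_
  rw [← Nat.Iio_eq_range, ← Fin.map_valEmbedding_Iio, prod_map]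
  rfl

theorem Monotone.prod_Ioi_cast_sub {R : Type*} [CommRing R] {f : ℕ → ℕ} (hf : Monotone f)
    (m : ℕ) : ∏ i : Fin m, ∏ j ∈ Ioi i, ((f j : R) - f i)
      = ((∏ j ∈ range m, ∏ i ∈ range j, (f j - f i) : ℕ) : R) := by
  rw [prod_Ioi_eq_prod_range_prod_range m (fun i j => (f j : R) - f i)]
  push_cast
  refine prod_congr rfl fun j _ => prod_congr rfl fun i hi => ?_
  rw [Nat.cast_sub (hf (mem_range.mp hi).le)]

theorem prod_range_two_mul {M : Type*} [CommMonoid M] (g : ℕ → M) (n : ℕ) :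
    ∏ i ∈ range (2 * n), g i = ∏ s ∈ range n, g (2 * s) * g (2 * s + 1) := by
  induction n with
  | zero => simp
  | succ n ih => rw [mul_add_one, prod_range_succ, prod_range_succ, prod_range_succ, ih, mul_assoc]

theorem prod_range_three_consecutive_eq_factorial (n : ℕ) :
    ∏ s ∈ range n, (3 * s + 2) * (3 * s + 3) * (3 * s + 4) = (3 * n + 1)! := by
  induction n with
  | zero => simp
  | succ n ih =>
    rw [prod_range_succ, ih, show 3 * (n + 1) + 1 = 3 * n + 1 + 1 + 1 + 1 by ring,
      Nat.factorial_succ (3 * n + 1 + 1 + 1), Nat.factorial_succ (3 * n + 1 + 1),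
      Nat.factorial_succ (3 * n + 1)]
    ring

theorem prod_range_two_mul_factorial (n : ℕ) :
    ∏ k ∈ range (2 * n), k ! = (∏ k ∈ range n, k !) * ∏ i ∈ Icc 1 n, (n + i - 1)! := by
  rw [two_mul, prod_range_add, ← Ico_add_one_right_eq_Icc, prod_Ico_eq_prod_range]
  refine congrArg _ (prod_congr rfl fun k _ => ?_)
  congr 1
  omega

def yExponent (t : ℕ) : ℕ := t / 2 + t

theorem yExponent_monotone : Monotone yExponent := fun a b hab => by
  unfold yExponent
  omega

theorem yExponent_two_mul (m : ℕ) : yExponent (2 * m) = 3 * m := by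
  unfold yExponent
  omega

theorem yExponent_two_mul_add_one (m : ℕ) : yExponent (2 * m + 1) = 3 * m + 1 := by
  unfold yExponent
  omega

theorem Ypart_rev_add (n : ℕ) (t : Fin (2 * n)) : Ypart n t.rev + t = yExponent t := by
  simp only [Ypart, Fin.val_rev, yExponent]
  omega

theorem prod_yExponent_sub_last_two (n : ℕ) :
    (∏ i ∈ range (2 * n), (yExponent (2 * n) - yExponent i))
      * ∏ i ∈ range (2 * n + 1), (yExponent (2 * n + 1) - yExponent i)
      = 3 ^ n * n ! * (3 * n + 1)! := by
  rw [prod_range_succ _ (2 * n), yExponent_two_mul_add_one, yExponent_two_mul n,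
    Nat.add_sub_cancel_left, mul_one, ← prod_mul_distrib, prod_range_two_mul, ← prod_range_reflect]
  simp only [yExponent_two_mul, yExponent_two_mul_add_one]
  have hterm : ∀ s ∈ range n,
      (3 * n - 3 * (n - 1 - s)) * (3 * n + 1 - 3 * (n - 1 - s))
        * ((3 * n - (3 * (n - 1 - s) + 1)) * (3 * n + 1 - (3 * (n - 1 - s) + 1)))
      = 3 * (s + 1) * ((3 * s + 2) * (3 * s + 3) * (3 * s + 4)) := by
    intro s hs
    have hs := mem_range.mp hs
    rw [show 3 * n - 3 * (n - 1 - s) = 3 * (s + 1) by omega,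
      show 3 * n + 1 - 3 * (n - 1 - s) = 3 * s + 4 by omega,
      show 3 * n - (3 * (n - 1 - s) + 1) = 3 * s + 2 by omega,
      show 3 * n + 1 - (3 * (n - 1 - s) + 1) = 3 * s + 3 by omega]
    ring
  rw [prod_congr rfl hterm, prod_mul_distrib, prod_range_three_consecutive_eq_factorial,
    prod_mul_distrib, prod_const, card_range, prod_range_add_one_eq_factorial]

theorem prod_range_prod_range_yExponent_sub (n : ℕ) :
    ∏ j ∈ range (2 * n), ∏ i ∈ range j, (yExponent j - yExponent i)
      = 3 ^ (n * (n - 1) / 2) * (∏ i ∈ Icc 1 n, (3 * i - 2)!) * ∏ k ∈ range n, k ! := by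
  induction n with
  | zero => simp
  | succ n ih =>
    rw [mul_add_one, prod_range_succ, prod_range_succ, mul_assoc, prod_yExponent_sub_last_two, ih,
      prod_Icc_succ_top (by omega), prod_range_succ, Nat.triangle_succ, pow_add,
      show 3 * (n + 1) - 2 = 3 * n + 1 by omega]
    ring

theorem schur_Y_eval_ones_general (n : ℕ) :
    eval (fun _ : Fin (2 * n) => (1 : ℂ)) (schur (2 * n) (Ypart n))
      = 3 ^ (n * (n - 1) / 2)
        * ∏ i ∈ Finset.Icc 1 n,
            (Nat.factorial (3 * i - 2) : ℂ) / (Nat.factorial (n + i - 1) : ℂ) := by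
  have hexp := prod_factorial_mul_eval_one_schur (2 * n) (Ypart n)
  simp_rw [Ypart_rev_add] at hexp
  rw [yExponent_monotone.prod_Ioi_cast_sub, prod_range_prod_range_yExponent_sub,
    Fin.prod_univ_eq_prod_range (fun k => (k ! : ℂ)), ← Nat.cast_prod,
    prod_range_two_mul_factorial] at hexp
  push_cast at hexp
  have hfact (k : ℕ) : (k ! : ℂ) ≠ 0 := by exact_mod_cast k.factorial_ne_zero
  rw [prod_div_distrib, ← mul_div_assoc, eq_div_iff (prod_ne_zero_iff.mpr fun _ _ => hfact _),
    ← mul_right_inj' (prod_ne_zero_iff.mpr fun k (_ : k ∈ range n) => hfact k)]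
  linear_combination hexp

/-- Homogeneous-point sum rule: `s_{Y_n}(1,…,1) = 3^{n(n-1)/2} ∏_{i=1}^n (3i-2)!/(n+i-1)!`. -/
theorem schur_Y_eval_ones (n : ℕ) (hn : 1 ≤ n) :
    eval (fun _ : Fin (2 * n) => (1 : ℂ)) (schur (2 * n) (Ypart n))
      = 3 ^ (n * (n - 1) / 2)
        * ∏ i ∈ Finset.Icc 1 n,
            (Nat.factorial (3 * i - 2) : ℂ) / (Nat.factorial (n + i - 1) : ℂ) :=
  schur_Y_eval_ones_general n
end

section
/- For every integer n ≥ 0 the following identity holds in ℚ: (1 / (2^n · (2n+1)!)) · ∏_{j=1}^{n} ( j! · (3j+1)! / ( j · ((2j−1)!)² ) ) = ∏_{j=1}^{n+1} (3j−2)! / (n+j)!. -/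
/-!
The factors `(3j+1)!`, `1 ≤ j ≤ n`, on the left are the factors `(3j-2)!`, `2 ≤ j ≤ n+1`, on the
right, so the identity is really one between superfactorials `sf m = 1! 2! ⋯ m!`. The right-hand
denominator is `(n+1)! ⋯ (2n+1)! = sf (2n+1) / sf n`, and pairing `(2j)! = 2j · (2j-1)!` with
`(2j-1)!` gives `sf (2n+1) = (2n+1)! 2ⁿ n! ∏_{j=1}^n ((2j-1)!)²`, which accounts for the rest.
-/

open Finset Nat

theorem Finset.prod_Icc_one_eq_prod_range {M : Type*} [CommMonoid M] (f : ℕ → M) (n : ℕ) :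
    ∏ j ∈ Icc 1 n, f j = ∏ i ∈ range n, f (i + 1) := by
  rw [← Ico_add_one_right_eq_Icc, prod_Ico_eq_prod_range, Nat.add_sub_cancel]
  simp only [add_comm 1]

theorem Nat.prod_Icc_id_eq_factorial (n : ℕ) : ∏ j ∈ Icc 1 n, j = n ! := by
  rw [prod_Icc_one_eq_prod_range, prod_range_add_one_eq_factorial]

theorem Nat.superFactorial_two_mul_add_one (n : ℕ) :
    sf (2 * n + 1) = (2 * n + 1)! * 2 ^ n * n ! * ∏ j ∈ Icc 1 n, (2 * j - 1)! ^ 2 := by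
  rw [superFactorial_succ, superFactorial_two_mul, prod_Icc_one_eq_prod_range, prod_pow]
  simp only [show ∀ i, 2 * (i + 1) - 1 = 2 * i + 1 by omega]
  ring

theorem Nat.prod_Icc_factorial_add_mul_superFactorial (n m : ℕ) :
    (∏ j ∈ Icc 1 m, (n + j)!) * sf n = sf (n + m) := by
  induction m with
  | zero => simp
  | succ m ih =>
    rw [prod_Icc_succ_top (by omega), mul_right_comm, ih, ← add_assoc, superFactorial_succ,
      mul_comm]

theorem Nat.prod_Icc_factorial_three_mul_sub_two (n : ℕ) :
    ∏ j ∈ Icc 1 (n + 1), (3 * j - 2)! = ∏ j ∈ Icc 1 n, (3 * j + 1)! := by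
  induction n with
  | zero => simp
  | succ n ih =>
    rw [prod_Icc_succ_top (by omega), ih, prod_Icc_succ_top (by omega),
      show 3 * (n + 1 + 1) - 2 = 3 * (n + 1) + 1 by omega]

/-- The factorial identity
`(1/(2^n (2n+1)!)) ∏_{j=1}^n j!(3j+1)!/(j ((2j-1)!)²) = ∏_{j=1}^{n+1} (3j-2)!/(n+j)!` in `ℚ`. -/
theorem factorial_identity (n : ℕ) :
    (1 / ((2 : ℚ) ^ n * (Nat.factorial (2 * n + 1) : ℚ)))
      * ∏ j ∈ Finset.Icc 1 n,
          ((Nat.factorial j : ℚ) * (Nat.factorial (3 * j + 1) : ℚ))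
            / ((j : ℚ) * ((Nat.factorial (2 * j - 1) : ℚ)) ^ 2)
      = ∏ j ∈ Finset.Icc 1 (n + 1),
          (Nat.factorial (3 * j - 2) : ℚ) / (Nat.factorial (n + j) : ℚ) := by
  have hsf : (∏ j ∈ Icc 1 n, (j ! : ℚ)) = sf n := by exact_mod_cast prod_Icc_factorial n
  have hid : (∏ j ∈ Icc 1 n, (j : ℚ)) = n ! := by
    rw [← prod_Icc_id_eq_factorial, cast_prod]
  have hnum : (∏ j ∈ Icc 1 (n + 1), ((3 * j - 2)! : ℚ)) = ∏ j ∈ Icc 1 n, ((3 * j + 1)! : ℚ) := by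
    exact_mod_cast prod_Icc_factorial_three_mul_sub_two n
  have hden : (∏ j ∈ Icc 1 (n + 1), ((n + j)! : ℚ)) * sf n
      = (2 * n + 1)! * 2 ^ n * n ! * ∏ j ∈ Icc 1 n, ((2 * j - 1)! : ℚ) ^ 2 := by
    have h := prod_Icc_factorial_add_mul_superFactorial n (n + 1)
    rw [show n + (n + 1) = 2 * n + 1 by omega, superFactorial_two_mul_add_one] at h
    exact_mod_cast h
  rw [prod_div_distrib, prod_mul_distrib, prod_mul_distrib, hsf, hid, prod_div_distrib, hnum]
  field_simp
  linear_combination hden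
end
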